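/- arXiv:2605.21147 — 4 statements merged into one kernel-verified Lean document; each statement's English description precedes it below -/
import Mathlib

section
/- Let d_out, d_in, K, ρ be positive integers with K dividing both d_out and d_in, and set p = d_out/K, q = d_in/K and s = min(p, q). For k = 1, …, K let A_k ∈ ℝ^{ρ×q}, B_k ∈ ℝ^{p×ρ}, M_k ∈ ℝ^{p×q}, and set ΔM_k = (B_k A_k) ⊙ M_k. Let P_out be a d_out × d_out permutation matrix, P_in a d_in × d_in permutation matrix, and ΔW = P_outᵀ · blkdiag(ΔM_1, …, ΔM_K) · P_in. Then rank(ΔW) = rank(blkdiag(ΔM_1, …, ΔM_K)) ≤ Σ_{k=1}^{K} min( s, ρ · rank(M_k) ) ≤ min(d_out, d_in). -/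
/-- A permutation matrix: a square 0–1 matrix with exactly one 1 in each row
and each column. -/
def IsPermMatrix {ι : Type*} (P : Matrix ι ι ℝ) : Prop :=
  (∀ i j, P i j = 0 ∨ P i j = 1) ∧ (∀ i, ∃! j, P i j = 1) ∧ (∀ j, ∃! i, P i j = 1)

lemma IsPermMatrix.isUnit_det {ι : Type*} [Fintype ι] [DecidableEq ι]
    {P : Matrix ι ι ℝ} (hP : IsPermMatrix P) : IsUnit P.det := by
  obtain ⟨h01, hrow, hcol⟩ := hP
  have hf : ∀ i, P i (hrow i).choose = 1 := fun i => (hrow i).choose_spec.1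
  have hinj : Function.Injective (fun i => (hrow i).choose) := by
    intro i1 i2 h
    simp only at h
    exact (hcol ((hrow i1).choose)).unique (hf i1) (by rw [h]; exact hf i2)
  let σ : Equiv.Perm ι := Equiv.ofBijective _ (Finite.injective_iff_bijective.mp hinj)
  have hPσ : P = σ.permMatrix ℝ := by
    ext i j
    simp only [Equiv.Perm.permMatrix]
    rw [PEquiv.toMatrix_toPEquiv_eq, Matrix.submatrix_apply, id_eq, Matrix.one_apply]
    by_cases h : σ i = j
    · rw [if_pos h, ← h]; exact hf i
    · rw [if_neg h]
      rcases h01 i j with h0 | h1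
      · exact h0
      · exact absurd ((hrow i).unique (hf i) h1 : σ i = j) h
  rw [hPσ, Matrix.det_permutation]
  rcases Int.units_eq_one_or (Equiv.Perm.sign σ) with h | h <;> rw [h] <;> simp

lemma matrix_rank_add_le {m n : Type*} [Fintype m] [Fintype n] (A B : Matrix m n ℝ) :
    (A + B).rank ≤ A.rank + B.rank := by
  rw [Matrix.rank, Matrix.rank, Matrix.rank, Matrix.mulVecLin_add]
  refine le_trans (Submodule.finrank_mono ?_) (Submodule.finrank_add_le_finrank_add_finrank _ _)
  intro x hx
  obtain ⟨y, rfl⟩ := hx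
  exact Submodule.add_mem_sup ⟨y, rfl⟩ ⟨y, rfl⟩

lemma matrix_rank_sum_le {m n ι : Type*} [Fintype m] [Fintype n] (s : Finset ι)
    (f : ι → Matrix m n ℝ) : (∑ i ∈ s, f i).rank ≤ ∑ i ∈ s, (f i).rank := by
  classical
  induction s using Finset.cons_induction with
  | empty => simp [Matrix.rank_zero]
  | cons a s ha ih =>
      rw [Finset.sum_cons, Finset.sum_cons]
      exact (matrix_rank_add_le _ _).trans (Nat.add_le_add_left ih _)

/-- **Spectrum-aware rank ceiling for SMoA.**
With `K ∣ d_out`, `K ∣ d_in`, `p = d_out / K`, `q = d_in / K`, `s = min p q`,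
blocks `ΔM k = (B k * A k) ⊙ M k`, and
`ΔW = P_outᵀ * blkdiag (ΔM 1, …, ΔM K) * P_in` for permutation matrices
`P_out`, `P_in`, we have
`rank ΔW = rank (blkdiag ΔM) ≤ ∑ k, min s (ρ * rank (M k)) ≤ min d_out d_in`. -/
theorem smoa_rank_ceiling (dout din K ρ : ℕ)
    (hdout : 0 < dout) (hdin : 0 < din) (hK : 0 < K) (hρ : 0 < ρ)
    (hKout : K ∣ dout) (hKin : K ∣ din)
    (A : Fin K → Matrix (Fin ρ) (Fin (din / K)) ℝ)
    (B : Fin K → Matrix (Fin (dout / K)) (Fin ρ) ℝ)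
    (M : Fin K → Matrix (Fin (dout / K)) (Fin (din / K)) ℝ)
    (Pout : Matrix (Fin (dout / K) × Fin K) (Fin (dout / K) × Fin K) ℝ)
    (Pin : Matrix (Fin (din / K) × Fin K) (Fin (din / K) × Fin K) ℝ)
    (hPout : IsPermMatrix Pout) (hPin : IsPermMatrix Pin) :
    (Pout.transpose *
        Matrix.blockDiagonal (fun k => Matrix.hadamard (B k * A k) (M k)) * Pin).rank =
      (Matrix.blockDiagonal fun k => Matrix.hadamard (B k * A k) (M k)).rank ∧
    (Matrix.blockDiagonal fun k => Matrix.hadamard (B k * A k) (M k)).rank ≤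
      ∑ k : Fin K, min (min (dout / K) (din / K)) (ρ * (M k).rank) ∧
    ∑ k : Fin K, min (min (dout / K) (din / K)) (ρ * (M k).rank) ≤ min dout din := by
  set D : Fin K → Matrix (Fin (dout / K)) (Fin (din / K)) ℝ :=
    fun k => Matrix.hadamard (B k * A k) (M k) with hD
  refine ⟨?_, ?_, ?_⟩
  · -- permutation invariance
    have hPoutT : IsPermMatrix Pout.transpose := by
      obtain ⟨h01, hrow, hcol⟩ := hPout
      refine ⟨fun i j => ?_, fun i => ?_, fun j => ?_⟩ <;>
        simp only [Matrix.transpose_apply]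
      exacts [h01 j i, hcol i, hrow j]
    rw [Matrix.rank_mul_eq_left_of_isUnit_det _ _ hPin.isUnit_det,
      Matrix.rank_mul_eq_right_of_isUnit_det _ _ hPoutT.isUnit_det]
  · -- rank bound
    -- blockDiagonal D = ∑ k, U k * D k * V k
    classical
    set U : Fin K → Matrix (Fin (dout / K) × Fin K) (Fin (dout / K)) ℝ :=
      fun k => Matrix.of fun ic r => if ic = (r, k) then (1:ℝ) else 0 with hU
    set V : Fin K → Matrix (Fin (din / K)) (Fin (din / K) × Fin K) ℝ :=
      fun k => Matrix.of fun r jc => if jc = (r, k) then (1:ℝ) else 0 with hV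
    have hdecomp : Matrix.blockDiagonal D = ∑ k : Fin K, U k * D k * V k := by
      ext ⟨i, c⟩ ⟨j, c'⟩
      have hterm : ∀ k : Fin K, (U k * D k * V k) (i, c) (j, c') =
          if c = k ∧ c' = k then D k i j else 0 := by
        intro k
        by_cases hc : c = k <;> by_cases hc' : c' = k <;>
          simp [hU, hV, Matrix.mul_apply, Prod.ext_iff, hc, hc', Finset.sum_ite_eq,
            Finset.sum_ite_eq', ite_and, mul_ite, ite_mul, Finset.mul_sum, Finset.sum_mul]
      rw [Matrix.sum_apply, Finset.sum_congr rfl fun k _ => hterm k,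
        Matrix.blockDiagonal_apply]
      by_cases hcc : c = c'
      · subst hcc
        simp [ite_and, Finset.sum_ite_eq]
      · simp only [hcc, if_false]
        refine (Finset.sum_eq_zero fun k _ => ?_).symm
        rw [if_neg]
        rintro ⟨rfl, rfl⟩
        exact hcc rfl
    rw [hdecomp]
    refine (matrix_rank_sum_le _ _).trans (Finset.sum_le_sum fun k _ => ?_)
    -- rank (U k * D k * V k) ≤ min (min p q) (ρ * rank (M k))
    refine le_min ?_ ?_
    · calc (U k * D k * V k).rank ≤ (U k * D k).rank := Matrix.rank_mul_le_left _ _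
        _ ≤ (D k).rank := Matrix.rank_mul_le_right _ _
        _ ≤ min (dout / K) (din / K) := by
            refine le_min ?_ ?_
            · exact (Matrix.rank_le_card_height _).trans (by simp)
            · exact (Matrix.rank_le_card_width _).trans (by simp)
    · calc (U k * D k * V k).rank ≤ (U k * D k).rank := Matrix.rank_mul_le_left _ _
        _ ≤ (D k).rank := Matrix.rank_mul_le_right _ _
        _ ≤ ρ * (M k).rank := by
            have hDk : D k = ∑ r : Fin ρ,
                Matrix.diagonal (fun i => B k i r) * M k *
                  Matrix.diagonal (fun j => A k r j) := by
              ext i j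
              rw [Matrix.sum_apply]
              simp only [Matrix.mul_diagonal, Matrix.diagonal_mul]
              simp only [hD, Matrix.hadamard_apply, Matrix.mul_apply, Finset.sum_mul]
              exact Finset.sum_congr rfl fun r _ => by ring
            rw [hDk]
            calc (∑ r : Fin ρ, Matrix.diagonal (fun i => B k i r) * M k *
                    Matrix.diagonal (fun j => A k r j)).rank
                ≤ ∑ r : Fin ρ, (Matrix.diagonal (fun i => B k i r) * M k *
                    Matrix.diagonal (fun j => A k r j)).rank := matrix_rank_sum_le _ _
              _ ≤ ∑ _r : Fin ρ, (M k).rank := by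
                  refine Finset.sum_le_sum fun r _ => ?_
                  exact (Matrix.rank_mul_le_left _ _).trans (Matrix.rank_mul_le_right _ _)
              _ = ρ * (M k).rank := by simp [Finset.sum_const, mul_comm]
  · -- arithmetic
    calc ∑ k : Fin K, min (min (dout / K) (din / K)) (ρ * (M k).rank)
        ≤ ∑ _k : Fin K, min (dout / K) (din / K) :=
          Finset.sum_le_sum fun k _ => min_le_left _ _
      _ = K * min (dout / K) (din / K) := by simp [Finset.sum_const, mul_comm]
      _ ≤ min dout din := by
          refine le_min ?_ ?_
          · calc K * min (dout / K) (din / K) ≤ K * (dout / K) :=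
                Nat.mul_le_mul_left _ (min_le_left _ _)
              _ = dout := Nat.mul_div_cancel' hKout
          · calc K * min (dout / K) (din / K) ≤ K * (din / K) :=
                Nat.mul_le_mul_left _ (min_le_right _ _)
              _ = din := Nat.mul_div_cancel' hKin
end

section
/- Let d_out, d_in, K, r be positive integers with K dividing both d_out and d_in, and set s = min(d_out/K, d_in/K). If K < min(d_out, d_in) and r < min(d_out, d_in), then, working in the rational numbers, K · min( s, (r/K) · s ) > r. -/
/-- **Rank-ceiling separation under full-rank local anchors (rational form).**
For positive integers `d_out, d_in, K, r` with `K ∣ d_out` and `K ∣ d_in`, and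
`s = min (d_out / K) (d_in / K)` (exact integer quotients), if
`K < min d_out d_in` and `r < min d_out d_in`, then, in the rational numbers,
`K * min s ((r / K) * s) > r`. -/
theorem smoa_full_rank_ceiling_gt_lora (dout din K r : ℕ)
    (hdout : 0 < dout) (hdin : 0 < din) (hK : 0 < K) (hr : 0 < r)
    (hKout : K ∣ dout) (hKin : K ∣ din)
    (hKlt : K < min dout din) (hrlt : r < min dout din) :
    (K : ℚ) * min ((min (dout / K) (din / K) : ℕ) : ℚ)
        ((r : ℚ) / (K : ℚ) * ((min (dout / K) (din / K) : ℕ) : ℚ)) > (r : ℚ) := by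
  obtain ⟨a, rfl⟩ := hKout
  obtain ⟨b, rfl⟩ := hKin
  rw [Nat.mul_div_cancel_left _ hK, Nat.mul_div_cancel_left _ hK]
  have hKlt' : K < K * a ∧ K < K * b := by
    constructor <;> [exact lt_of_lt_of_le hKlt (min_le_left _ _);
      exact lt_of_lt_of_le hKlt (min_le_right _ _)]
  have hs2 : 2 ≤ min a b := by
    have := hKlt'.1; have := hKlt'.2
    rcases Nat.lt_or_ge a 2 with h | h
    · interval_cases a <;> omega
    · rcases Nat.lt_or_ge b 2 with h' | h'
      · interval_cases b <;> omega
      · omega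
  set s : ℕ := min a b with hs
  have hsq : (2 : ℚ) ≤ (s : ℚ) := by exact_mod_cast hs2
  have hKq : (0 : ℚ) < (K : ℚ) := by exact_mod_cast hK
  have hrq : (0 : ℚ) < (r : ℚ) := by exact_mod_cast hr
  have hKs : (K : ℚ) * (s : ℚ) = ((min (K * a) (K * b) : ℕ) : ℚ) := by
    have : K * s = min (K * a) (K * b) := by
      rw [hs]; exact (Nat.mul_min_mul_left _ _ _).symm
    exact_mod_cast this
  rcases le_or_gt (K : ℚ) (r : ℚ) with h | h
  · have hmin : min ((s : ℚ)) ((r : ℚ) / K * s) = (s : ℚ) := by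
      apply min_eq_left
      have h1 : (1 : ℚ) ≤ (r : ℚ) / K := (one_le_div hKq).mpr h
      nlinarith
    rw [hmin, hKs]
    exact_mod_cast hrlt
  · have hmin : min ((s : ℚ)) ((r : ℚ) / K * s) = (r : ℚ) / K * s := by
      apply min_eq_right
      have h1 : (r : ℚ) / K ≤ 1 := by
        rw [div_le_one hKq]; linarith
      nlinarith
    rw [hmin]
    rw [show (K : ℚ) * ((r : ℚ) / K * s) = (r : ℚ) * s by field_simp]
    nlinarith
end

section
/- Let K, ρ, p, q be positive integers and r = Kρ. Suppose that for k = 1, …, K there exist M_k, C_k ∈ ℝ^{p×q} with rank(C_k) ≤ ρ such that the block-diagonal matrix W̃* = blkdiag(C_1 ⊙ M_1, …, C_K ⊙ M_K) satisfies rank(W̃*) > r. Then for any Kp × Kp permutation matrix P_out and Kq × Kq permutation matrix P_in, the matrix P_outᵀ · W̃* · P_in lies in the SMoA update family but not in the rank-r LoRA family; hence the set difference (SMoA family) \ (rank-r LoRA family) is nonempty. -/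
open Matrix in
lemma exists_factor_of_rank_le {p q ρ : ℕ} (C : Matrix (Fin p) (Fin q) ℝ)
    (h : C.rank ≤ ρ) :
    ∃ (B : Matrix (Fin p) (Fin ρ) ℝ) (A : Matrix (Fin ρ) (Fin q) ℝ), C = B * A := by
  set V := LinearMap.range C.mulVecLin with hV
  set d := Module.finrank ℝ V with hdd
  have hd : d ≤ ρ := h
  let b : Module.Basis (Fin d) ℝ V := Module.finBasis ℝ V
  have col_mem : ∀ j, (fun i => C i j) ∈ V := fun j =>
    ⟨Pi.single j 1, by ext i; simp [Matrix.mulVecLin, Matrix.mulVec_single]⟩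
  set g : Fin q → V := fun j => ⟨fun i => C i j, col_mem j⟩ with hg
  refine ⟨fun i k => if hk : (k : ℕ) < d then (b ⟨k, hk⟩ : Fin p → ℝ) i else 0,
    fun k j => if hk : (k : ℕ) < d then b.repr (g j) ⟨k, hk⟩ else 0, ?_⟩
  ext i j
  erw [Matrix.mul_apply]
  have step1 : ∑ k : Fin ρ,
      (if hk : (k : ℕ) < d then (b ⟨k, hk⟩ : Fin p → ℝ) i else 0) *
      (if hk : (k : ℕ) < d then b.repr (g j) ⟨k, hk⟩ else 0)
      = ∑ k : Fin d, (b k : Fin p → ℝ) i * b.repr (g j) k := by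
    set F : ℕ → ℝ := fun n => (if hk : n < d then (b ⟨n, hk⟩ : Fin p → ℝ) i else 0) *
        (if hk : n < d then b.repr (g j) ⟨n, hk⟩ else 0) with hF
    have e1 : ∑ k : Fin ρ,
        (if hk : (k : ℕ) < d then (b ⟨k, hk⟩ : Fin p → ℝ) i else 0) *
        (if hk : (k : ℕ) < d then b.repr (g j) ⟨k, hk⟩ else 0) = ∑ n ∈ Finset.range ρ, F n :=
      Fin.sum_univ_eq_sum_range F ρ
    have e2 : ∑ n ∈ Finset.range d, F n = ∑ k : Fin d, (b k : Fin p → ℝ) i * b.repr (g j) k := by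
      rw [← Fin.sum_univ_eq_sum_range F d]
      exact Finset.sum_congr rfl fun k _ => by simp [hF]
    rw [e1, ← Finset.sum_subset (Finset.range_subset_range.2 hd), e2]
    intro n _ hn
    have : ¬ n < d := fun hlt => hn (Finset.mem_range.2 hlt)
    simp [hF, this]
  rw [step1]
  have hsum : ((∑ k : Fin d, b.repr (g j) k • b k : V) : Fin p → ℝ) i = C i j := by
    rw [b.sum_repr (g j)]
  rw [← hsum]
  push_cast [Submodule.coe_sum]
  simp [Finset.sum_apply, mul_comm]

/-- The SMoA update family: all matrices
`P_outᵀ * blkdiag ((B 1 * A 1) ⊙ M 1, …, (B K * A K) ⊙ M K) * P_in` over choices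
of `A k ∈ ℝ^{ρ×q}` and `B k ∈ ℝ^{p×ρ}`. -/
def smoaFamily (K ρ p q : ℕ) (M : Fin K → Matrix (Fin p) (Fin q) ℝ)
    (Pout : Matrix (Fin p × Fin K) (Fin p × Fin K) ℝ)
    (Pin : Matrix (Fin q × Fin K) (Fin q × Fin K) ℝ) :
    Set (Matrix (Fin p × Fin K) (Fin q × Fin K) ℝ) :=
  {Δ | ∃ (A : Fin K → Matrix (Fin ρ) (Fin q) ℝ) (B : Fin K → Matrix (Fin p) (Fin ρ) ℝ),
      Δ = Pout.transpose *
            (Matrix.blockDiagonal fun k => Matrix.hadamard (B k * A k) (M k)) * Pin}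

/-- The rank-`r` LoRA family: all products `B * A` with `B ∈ ℝ^{ι×r}` and
`A ∈ ℝ^{r×κ}`. -/
def loraFamily (ι κ : Type*) (r : ℕ) : Set (Matrix ι κ ℝ) :=
  {Δ | ∃ (B : Matrix ι (Fin r) ℝ) (A : Matrix (Fin r) κ ℝ), Δ = B * A}

lemma perm_mul_transpose {ι : Type*} [Fintype ι] [DecidableEq ι]
    {P : Matrix ι ι ℝ} (h : IsPermMatrix P) : P * P.transpose = 1 := by
  obtain ⟨h01, hrow, hcol⟩ := h
  ext i j
  rw [Matrix.mul_apply]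
  obtain ⟨ji, hji, hjiu⟩ := hrow i
  rw [Finset.sum_eq_single ji]
  · rw [Matrix.transpose_apply, hji, one_mul]
    by_cases hij : i = j
    · subst hij; rw [hji, Matrix.one_apply_eq]
    · rw [Matrix.one_apply_ne hij]
      rcases h01 j ji with h0 | h1
      · exact h0
      · obtain ⟨i', _, hi'u⟩ := hcol ji
        exact absurd ((hi'u i hji).trans (hi'u j h1).symm) hij
  · intro k _ hk
    rcases h01 i k with h0 | h1
    · rw [h0, zero_mul]
    · exact absurd (hjiu k h1) hk
  · intro hni; exact absurd (Finset.mem_univ ji) hni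

lemma perm_isUnit_det {ι : Type*} [Fintype ι] [DecidableEq ι]
    {P : Matrix ι ι ℝ} (h : IsPermMatrix P) : IsUnit P.det := by
  have := congrArg Matrix.det (perm_mul_transpose h)
  rw [Matrix.det_mul, Matrix.det_one] at this
  exact IsUnit.of_mul_eq_one _ this

/-- **Expressive family separation (witness form).**
With `r = K * ρ`, `rank (C k) ≤ ρ` for all `k`, and
`W̃* = blkdiag (C 1 ⊙ M 1, …, C K ⊙ M K)` of rank `> r`, for any permutation
matrices `P_out`, `P_in` the matrix `P_outᵀ * W̃* * P_in` lies in the SMoA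
family but not in the rank-`r` LoRA family; hence the set difference is
nonempty. -/
theorem smoa_lora_family_separation (K ρ p q : ℕ)
    (hK : 0 < K) (hρ : 0 < ρ) (hp : 0 < p) (hq : 0 < q)
    (M C : Fin K → Matrix (Fin p) (Fin q) ℝ)
    (hC : ∀ k, (C k).rank ≤ ρ)
    (hrank : K * ρ < (Matrix.blockDiagonal fun k => Matrix.hadamard (C k) (M k)).rank)
    (Pout : Matrix (Fin p × Fin K) (Fin p × Fin K) ℝ) (hPout : IsPermMatrix Pout)
    (Pin : Matrix (Fin q × Fin K) (Fin q × Fin K) ℝ) (hPin : IsPermMatrix Pin) :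
    Pout.transpose * (Matrix.blockDiagonal fun k => Matrix.hadamard (C k) (M k)) * Pin ∈
        smoaFamily K ρ p q M Pout Pin ∧
    Pout.transpose * (Matrix.blockDiagonal fun k => Matrix.hadamard (C k) (M k)) * Pin ∉
        loraFamily (Fin p × Fin K) (Fin q × Fin K) (K * ρ) ∧
    (smoaFamily K ρ p q M Pout Pin \
        loraFamily (Fin p × Fin K) (Fin q × Fin K) (K * ρ)).Nonempty := by
  set W := Matrix.blockDiagonal fun k => Matrix.hadamard (C k) (M k) with hW
  choose B A hBA using fun k => exists_factor_of_rank_le (C k) (hC k)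
  have hmem : Pout.transpose * W * Pin ∈ smoaFamily K ρ p q M Pout Pin := by
    refine ⟨A, B, ?_⟩
    rw [hW]
    simp only [← hBA]
  have hrk : (Pout.transpose * W * Pin).rank = W.rank := by
    rw [Matrix.rank_mul_eq_left_of_isUnit_det Pin _ (perm_isUnit_det hPin),
      Matrix.rank_mul_eq_right_of_isUnit_det Pout.transpose W
        (by rw [Matrix.det_transpose]; exact perm_isUnit_det hPout)]
  have hnot : Pout.transpose * W * Pin ∉
      loraFamily (Fin p × Fin K) (Fin q × Fin K) (K * ρ) := by
    rintro ⟨B', A', hEq⟩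
    have hle : (B' * A').rank ≤ K * ρ :=
      le_trans (Matrix.rank_mul_le_left B' A')
        ((Matrix.rank_le_card_width B').trans (by simp))
    rw [← hEq, hrk] at hle
    omega
  exact ⟨hmem, hnot, ⟨_, hmem, hnot⟩⟩
end

section
/- (Eckart–Young–Mirsky, Frobenius norm) Let A be a real m×n matrix with singular values σ_1(A) ≥ σ_2(A) ≥ … ≥ σ_{min(m,n)}(A) ≥ 0, and let r be a nonnegative integer with r ≤ min(m, n). Then the infimum of ‖X − A‖_F² over all real m×n matrices X with rank(X) ≤ r equals Σ_{j > r} σ_j(A)², and this infimum is attained (by the rank-r truncated singular value decomposition of A). -/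
/-- The squared Frobenius norm of a real matrix: the sum of the squares of its
entries. -/
noncomputable def frobSq {ι κ : Type*} [Fintype ι] [Fintype κ] (A : Matrix ι κ ℝ) : ℝ :=
  ∑ i, ∑ j, (A i j) ^ 2

/-- The singular values of a real matrix `A`, listed in nonincreasing order:
`singularValues A j` is the `(j+1)`-st largest square root of an eigenvalue of
`AᵀA` (= `AᴴA` over `ℝ`), for `j : Fin (min (card ι) (card κ))`. -/
noncomputable def singularValues {ι κ : Type*} [Fintype ι] [Fintype κ] [DecidableEq κ]
    (A : Matrix ι κ ℝ) : Fin (min (Fintype.card ι) (Fintype.card κ)) → ℝ :=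
  fun j =>
    let g : Fin (Fintype.card κ) → ℝ := fun i =>
      Real.sqrt ((Matrix.isHermitian_conjTranspose_mul_self A).eigenvalues₀ i)
    g (Tuple.sort g ⟨Fintype.card κ - 1 - j.val, by have := j.isLt; omega⟩)

open Matrix Finset in
lemma frobSq_eq_trace {ι κ : Type*} [Fintype ι] [Fintype κ] (M : Matrix ι κ ℝ) :
    frobSq M = (Mᵀ * M).trace := by
  simp only [frobSq, Matrix.trace, Matrix.diag, Matrix.mul_apply, Matrix.transpose_apply, sq]
  exact Finset.sum_comm

lemma frobSq_nonneg {ι κ : Type*} [Fintype ι] [Fintype κ] (M : Matrix ι κ ℝ) :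
    0 ≤ frobSq M :=
  Finset.sum_nonneg fun _ _ => Finset.sum_nonneg fun _ _ => sq_nonneg _

open Matrix in
lemma frobSq_mul_le {ι κ τ : Type*} [Fintype ι] [Fintype κ] [Fintype τ] [DecidableEq κ]
    [DecidableEq τ] (M : Matrix ι κ ℝ) (W : Matrix κ τ ℝ) (hW : Wᵀ * W = 1) :
    frobSq (M * W) ≤ frobSq M := by
  set Q : Matrix κ κ ℝ := W * Wᵀ with hQ
  set C : Matrix κ κ ℝ := Mᵀ * M with hC
  have hQt : Qᵀ = Q := by rw [hQ, transpose_mul, transpose_transpose]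
  have hQQ : Q * Q = Q := by
    rw [hQ, show W * Wᵀ * (W * Wᵀ) = W * (Wᵀ * W) * Wᵀ by simp only [Matrix.mul_assoc], hW,
      Matrix.mul_one]
  have h1 : frobSq (M * W) = (C * Q).trace := by
    rw [frobSq_eq_trace, transpose_mul,
      show Wᵀ * Mᵀ * (M * W) = Wᵀ * (C * W) by simp only [hC, Matrix.mul_assoc],
      Matrix.trace_mul_comm, show C * W * Wᵀ = C * Q by rw [hQ, Matrix.mul_assoc]]
  have h2 : frobSq (M * (1 - Q)) = (C * (1 - Q)).trace := by
    have h1Qt : (1 - Q)ᵀ = 1 - Q := by rw [transpose_sub, transpose_one, hQt]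
    have h1QQ : (1 - Q) * (1 - Q) = 1 - Q := by
      rw [mul_sub, sub_mul, sub_mul, hQQ, mul_one, one_mul, mul_one]; abel
    rw [frobSq_eq_trace, transpose_mul, h1Qt,
      show (1 - Q) * Mᵀ * (M * (1 - Q)) = (1 - Q) * (C * (1 - Q)) by
        simp only [hC, Matrix.mul_assoc],
      Matrix.trace_mul_comm, show C * (1 - Q) * (1 - Q) = C * (1 - Q) by
        rw [Matrix.mul_assoc, h1QQ]]
  have h3 : frobSq M = frobSq (M * W) + frobSq (M * (1 - Q)) := by
    rw [h1, h2, frobSq_eq_trace, Matrix.mul_sub, Matrix.mul_one, Matrix.trace_sub]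
    ring
  linarith [frobSq_nonneg (M * (1 - Q))]

lemma card_filter_fin_lt {N : ℕ} (r : ℕ) (hr : r ≤ N) :
    (Finset.univ.filter fun j : Fin N => (j : ℕ) < r).card = r := by
  conv_rhs => rw [← Finset.card_fin r]
  refine Finset.card_bij' (fun (j : Fin N) hj => (⟨j.1, (Finset.mem_filter.mp hj).2⟩ : Fin r))
    (fun (t : Fin r) _ => (⟨t.1, t.2.trans_le hr⟩ : Fin N)) (fun a ha => Finset.mem_univ _)
    (fun t ht => Finset.mem_filter.mpr ⟨Finset.mem_univ _, t.2⟩) (fun a ha => rfl)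
    (fun t ht => rfl)

lemma eym_key {N : ℕ} (r : ℕ) (μ q : Fin N → ℝ) (hμa : Antitone μ) (hμ0 : ∀ j, 0 ≤ μ j)
    (hq0 : ∀ j, 0 ≤ q j) (hq1 : ∀ j, q j ≤ 1) (hqs : (N : ℝ) - r ≤ ∑ j, q j) :
    ∑ j ∈ Finset.univ.filter (fun j : Fin N => r ≤ (j : ℕ)), μ j ≤ ∑ j, μ j * q j := by
  classical
  by_cases hrN : N ≤ r
  · have hemp : (Finset.univ.filter fun j : Fin N => r ≤ (j : ℕ)) = ∅ := by
      apply Finset.filter_false_of_mem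
      intro j _
      have := j.isLt
      omega
    rw [hemp, Finset.sum_empty]
    exact Finset.sum_nonneg fun j _ => mul_nonneg (hμ0 j) (hq0 j)
  · push_neg at hrN
    set F := Finset.univ.filter (fun j : Fin N => r ≤ (j : ℕ)) with hF
    set G := Finset.univ.filter (fun j : Fin N => ¬ r ≤ (j : ℕ)) with hG
    set ν := μ ⟨r, hrN⟩ with hν
    have hν0 : 0 ≤ ν := hμ0 _
    have hF1 : ∀ j ∈ F, μ j ≤ ν := by
      intro j hj
      exact hμa (by exact (Finset.mem_filter.mp hj).2 : (⟨r, hrN⟩ : Fin N) ≤ j)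
    have hG1 : ∀ j ∈ G, ν ≤ μ j := by
      intro j hj
      have : (j : ℕ) < r := by have := (Finset.mem_filter.mp hj).2; omega
      exact hμa (le_of_lt (by exact this : j < (⟨r, hrN⟩ : Fin N)))
    have hGcard : G.card = r := by
      rw [show G = Finset.univ.filter (fun j : Fin N => (j : ℕ) < r) from by
        ext j; simp only [hG, Finset.mem_filter, Finset.mem_univ, true_and]; omega]
      exact card_filter_fin_lt r hrN.le
    have hFGcard : F.card + G.card = N := by
      rw [hF, hG, Finset.card_filter_add_card_filter_not, Finset.card_univ,
        Fintype.card_fin]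
    have hFcard : (F.card : ℝ) = (N : ℝ) - r := by
      have : F.card = N - r := by omega
      rw [this, Nat.cast_sub hrN.le]
    have hqsplit : (∑ j, q j) = ∑ j ∈ F, q j + ∑ j ∈ G, q j :=
      (Finset.sum_filter_add_sum_filter_not _ _ _).symm
    have hmqsplit : (∑ j, μ j * q j) = ∑ j ∈ F, μ j * q j + ∑ j ∈ G, μ j * q j :=
      (Finset.sum_filter_add_sum_filter_not _ _ _).symm
    have s1 : ∑ j ∈ F, μ j * (1 - q j) ≤ ν * ∑ j ∈ F, (1 - q j) := by
      rw [Finset.mul_sum]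
      exact Finset.sum_le_sum fun j hj =>
        mul_le_mul_of_nonneg_right (hF1 j hj) (by linarith [hq1 j])
    have s2 : ∑ j ∈ F, (1 - q j) ≤ ∑ j ∈ G, q j := by
      rw [Finset.sum_sub_distrib, Finset.sum_const, nsmul_eq_mul, mul_one]
      linarith
    have s3 : ν * ∑ j ∈ G, q j ≤ ∑ j ∈ G, μ j * q j := by
      rw [Finset.mul_sum]
      exact Finset.sum_le_sum fun j hj =>
        mul_le_mul_of_nonneg_right (hG1 j hj) (hq0 j)
    have s4 : ν * ∑ j ∈ F, (1 - q j) ≤ ν * ∑ j ∈ G, q j :=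
      mul_le_mul_of_nonneg_left s2 hν0
    have hFsplit : ∑ j ∈ F, μ j = ∑ j ∈ F, μ j * q j + ∑ j ∈ F, μ j * (1 - q j) := by
      rw [← Finset.sum_add_distrib]
      exact Finset.sum_congr rfl fun j _ => by ring
    linarith

lemma le_one_of_sq_le {x : ℝ} (h : x ^ 2 ≤ x) : x ≤ 1 := by nlinarith

lemma frobSq_neg {ι κ : Type*} [Fintype ι] [Fintype κ] (M : Matrix ι κ ℝ) :
    frobSq (-M) = frobSq M := by
  simp [frobSq]


open Matrix Finset in
theorem eckart_young_mirsky_aux (m n r : ℕ) (hr : r ≤ min m n)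
    (A : Matrix (Fin m) (Fin n) ℝ) :
    IsLeast {e : ℝ | ∃ X : Matrix (Fin m) (Fin n) ℝ, X.rank ≤ r ∧ e = frobSq (X - A)}
      (∑ j ∈ Finset.univ.filter
        (fun j : Fin (min (Fintype.card (Fin m)) (Fintype.card (Fin n))) => r ≤ (j : ℕ)),
        (singularValues A j) ^ 2) := by
  classical
  have hrn : r ≤ n := hr.trans (min_le_right _ _)
  have hAt : Aᴴ = Aᵀ := Matrix.conjTranspose_eq_transpose_of_trivial A
  have hB : (Aᴴ * A).IsHermitian := Matrix.isHermitian_conjTranspose_mul_self A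
  set Kn := Fintype.card (Fin n) with hKn
  set Km := Fintype.card (Fin m) with hKm
  have hKnn : Kn = n := Fintype.card_fin n
  have hKmm : Km = m := Fintype.card_fin m
  set E : Fin n → ℝ := hB.eigenvalues with hE
  set E₀ : Fin Kn → ℝ := hB.eigenvalues₀ with hE₀def
  set g : Fin Kn → ℝ := fun i => Real.sqrt (E₀ i) with hg
  set π := Tuple.sort g with hπ
  set c : Fin Kn ≃ Fin n := Fintype.equivOfCardEq (Fintype.card_fin _) with hc
  set φ : Fin Kn ≃ Fin n := (Fin.revPerm.trans π).trans c with hφ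
  set μ : Fin Kn → ℝ := fun j => E (φ j) with hμ
  have hφ_apply : ∀ j, φ j = c (π (Fin.rev j)) := fun j => rfl
  have hE₀c : ∀ i, E₀ i = E (c i) := by
    intro i
    show E₀ i = E₀ (c.symm (c i))
    rw [Equiv.symm_apply_apply]
  have hE0 : ∀ i, 0 ≤ E i := fun i => Matrix.eigenvalues_conjTranspose_mul_self_nonneg A i
  have hE₀0 : ∀ i, 0 ≤ E₀ i := fun i => (hE₀c i) ▸ hE0 (c i)
  have hgsq : ∀ i, g i ^ 2 = E₀ i := fun i => Real.sq_sqrt (hE₀0 i)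
  have hμ0 : ∀ j, 0 ≤ μ j := fun j => hE0 _
  have hμE₀ : ∀ j, μ j = E₀ (π (Fin.rev j)) := fun j => (hE₀c _).symm
  have hμg : ∀ j, μ j = g (π (Fin.rev j)) ^ 2 := fun j => by rw [hμE₀, hgsq]
  have hμanti : Antitone μ := by
    intro a b hab
    have h1 : g (π (Fin.rev b)) ≤ g (π (Fin.rev a)) :=
      Tuple.monotone_sort g (Fin.rev_le_rev.mpr hab)
    rw [hμg, hμg]
    exact pow_le_pow_left₀ (Real.sqrt_nonneg _) h1 2
  have hsv : ∀ j : Fin (min Km Kn), singularValues A j ^ 2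
      = μ ⟨j.1, j.2.trans_le (min_le_right _ _)⟩ := by
    intro j
    have h1 : singularValues A j = g (π ⟨Kn - 1 - j.1, by have := j.isLt; omega⟩) := rfl
    have h2 : (⟨Kn - 1 - j.1, by have := j.isLt; omega⟩ : Fin Kn)
        = Fin.rev ⟨j.1, j.2.trans_le (min_le_right _ _)⟩ := by
      apply Fin.ext
      simp [Fin.rev]
      omega
    rw [h1, h2, ← hμg]
  -- vanishing of eigenvalues beyond the rank
  have hrank : (Aᴴ * A).rank ≤ min Km Kn := by
    rw [Matrix.rank_conjTranspose_mul_self]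
    exact le_min (Matrix.rank_le_card_height A) (Matrix.rank_le_card_width A)
  have hcardE : (Finset.univ.filter fun i : Fin n => E i ≠ 0).card = (Aᴴ * A).rank := by
    rw [hB.rank_eq_card_non_zero_eigs, Fintype.card_subtype]
  have hcardμ : (Finset.univ.filter fun j : Fin Kn => μ j ≠ 0).card
      = (Finset.univ.filter fun i : Fin n => E i ≠ 0).card := by
    apply Finset.card_equiv φ
    intro j
    simp [hμ]
  have hvanish : ∀ j : Fin Kn, min Km Kn ≤ j.1 → μ j = 0 := by
    intro j hj
    by_contra hne
    have hpos : 0 < μ j := (hμ0 j).lt_of_ne (Ne.symm hne)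
    have hsub : Finset.Iic j ⊆ Finset.univ.filter (fun i => μ i ≠ 0) := by
      intro i hi
      have : μ j ≤ μ i := hμanti (Finset.mem_Iic.mp hi)
      exact Finset.mem_filter.mpr ⟨Finset.mem_univ _, (hpos.trans_le this).ne'⟩
    have hcard := Finset.card_le_card hsub
    rw [Fin.card_Iic] at hcard
    omega
  -- rewrite the target sum
  have hT : (∑ j ∈ Finset.univ.filter
        (fun j : Fin (min Km Kn) => r ≤ (j : ℕ)), (singularValues A j) ^ 2)
      = ∑ j ∈ Finset.univ.filter (fun j : Fin Kn => r ≤ (j : ℕ)), μ j := by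
    have hKle : min Km Kn ≤ Kn := min_le_right _ _
    set G' : ℕ → ℝ := fun t => if h : t < Kn then μ ⟨t, h⟩ else 0 with hG'
    have step1 : (∑ j ∈ Finset.univ.filter
          (fun j : Fin (min Km Kn) => r ≤ (j : ℕ)), (singularValues A j) ^ 2)
        = ∑ j : Fin (min Km Kn), (if r ≤ (j : ℕ) then G' j.1 else 0) := by
      rw [Finset.sum_filter]
      apply Finset.sum_congr rfl
      intro j _
      by_cases h : r ≤ (j : ℕ)
      · rw [if_pos h, if_pos h, hsv j]
        simp only [hG']
        rw [dif_pos (j.2.trans_le hKle)]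
      · rw [if_neg h, if_neg h]
    have step2 : ∀ (KK : ℕ), (∑ j : Fin KK, (if r ≤ (j : ℕ) then G' j.1 else 0))
        = ∑ t ∈ Finset.range KK, (if r ≤ t then G' t else 0) :=
      fun KK => Fin.sum_univ_eq_sum_range (fun t => if r ≤ t then G' t else 0) KK
    have step3 : (∑ t ∈ Finset.range (min Km Kn), (if r ≤ t then G' t else 0))
        = ∑ t ∈ Finset.range Kn, (if r ≤ t then G' t else 0) := by
      apply Finset.sum_subset (Finset.range_subset_range.mpr hKle)
      intro t ht hnt
      rw [Finset.mem_range] at ht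
      rw [Finset.mem_range] at hnt
      by_cases h : r ≤ t
      · rw [if_pos h]
        simp only [hG']
        rw [dif_pos ht]
        exact hvanish ⟨t, ht⟩ (show Km ⊓ Kn ≤ t by omega)
      · rw [if_neg h]
    have step4 : (∑ j : Fin Kn, (if r ≤ (j : ℕ) then G' j.1 else 0))
        = ∑ j ∈ Finset.univ.filter (fun j : Fin Kn => r ≤ (j : ℕ)), μ j := by
      rw [Finset.sum_filter]
      apply Finset.sum_congr rfl
      intro j _
      by_cases h : r ≤ (j : ℕ)
      · rw [if_pos h, if_pos h]
        simp only [hG']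
        rw [dif_pos j.2]
      · rw [if_neg h, if_neg h]
    rw [step1, step2, step3, ← step2, step4]
  rw [hT]
  -- spectral setup
  set V : Matrix (Fin n) (Fin n) ℝ := (hB.eigenvectorUnitary : Matrix (Fin n) (Fin n) ℝ)
    with hV
  have hV2 : star V * V = 1 := hB.eigenvectorUnitary.2.1
  have hV1 : V * star V = 1 := hB.eigenvectorUnitary.2.2
  have hstarV : star V = Vᵀ := by
    rw [Matrix.star_eq_conjTranspose, Matrix.conjTranspose_eq_transpose_of_trivial]
  have hspec : Aᴴ * A = V * Matrix.diagonal E * star V := by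
    have h := hB.spectral_theorem
    have h2 : (RCLike.ofReal ∘ E : Fin n → ℝ) = E := by
      funext i; simp [RCLike.ofReal_real_eq_id]
    rw [h2] at h
    exact h
  have htraceB : (Aᴴ * A).trace = ∑ i, E i := by
    rw [hspec, Matrix.trace_mul_cycle, hV2, Matrix.one_mul, Matrix.trace_diagonal]
  constructor
  · -- membership
    set S : Finset (Fin n) := (Finset.univ.filter fun j : Fin Kn => (j : ℕ) < r).image φ
      with hS
    have hScard : S.card = r := by
      rw [hS, Finset.card_image_of_injective _ φ.injective, card_filter_fin_lt r (by omega)]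
    set d : Fin n → ℝ := fun i => if i ∈ S then 1 else 0 with hd
    set P : Matrix (Fin n) (Fin n) ℝ := V * Matrix.diagonal d * star V with hP
    have hdd : Matrix.diagonal d * Matrix.diagonal d = Matrix.diagonal d := by
      have hddf : (fun i => d i * d i) = d := funext fun i => by by_cases h : i ∈ S <;> simp [hd, h]
      rw [Matrix.diagonal_mul_diagonal, hddf]
    have hPP : P * P = P := by
      rw [hP]
      rw [show V * Matrix.diagonal d * star V * (V * Matrix.diagonal d * star V)
        = V * (Matrix.diagonal d * ((star V * V) * (Matrix.diagonal d * star V))) by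
          simp only [Matrix.mul_assoc], hV2, Matrix.one_mul]
      rw [show V * (Matrix.diagonal d * (Matrix.diagonal d * star V))
          = V * ((Matrix.diagonal d * Matrix.diagonal d) * star V) by
          simp only [Matrix.mul_assoc], hdd]
      simp only [Matrix.mul_assoc]
    refine ⟨A * P, ?_, ?_⟩
    · calc (A * P).rank ≤ P.rank := Matrix.rank_mul_le_right _ _
        _ ≤ (V * Matrix.diagonal d).rank := by
            rw [hP]; exact Matrix.rank_mul_le_left _ _
        _ ≤ (Matrix.diagonal d).rank := Matrix.rank_mul_le_right _ _
        _ = Fintype.card {i // d i ≠ 0} := Matrix.rank_diagonal d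
        _ = S.card := by
            rw [Fintype.card_subtype]
            congr 1
            ext i
            simp [hd]
        _ = r := hScard
    · have hXA : A * P - A = A * (P - 1) := by rw [Matrix.mul_sub, Matrix.mul_one]
      have hPt2 : Pᵀ = P := by
        rw [hP, hstarV, Matrix.transpose_mul, Matrix.transpose_mul,
          Matrix.transpose_transpose, Matrix.diagonal_transpose, Matrix.mul_assoc]
      have h1Pt : (P - 1)ᵀ = P - 1 := by
        rw [Matrix.transpose_sub, Matrix.transpose_one, hPt2]
      have hPP1 : (P - 1) * (P - 1) = 1 - P := by
        simp only [Matrix.sub_mul, Matrix.mul_sub, Matrix.mul_one, Matrix.one_mul, hPP]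
        abel
      have hBP : ((Aᴴ * A) * P).trace = ∑ i ∈ S, E i := by
        rw [hspec, hP]
        rw [show V * Matrix.diagonal E * star V * (V * Matrix.diagonal d * star V)
            = V * (Matrix.diagonal E * ((star V * V) * (Matrix.diagonal d * star V))) by
            simp only [Matrix.mul_assoc], hV2, Matrix.one_mul]
        rw [show V * (Matrix.diagonal E * (Matrix.diagonal d * star V))
            = V * (Matrix.diagonal E * Matrix.diagonal d) * star V by
            simp only [Matrix.mul_assoc], Matrix.diagonal_mul_diagonal]
        rw [Matrix.trace_mul_cycle, hV2, Matrix.one_mul, Matrix.trace_diagonal]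
        simp [hd, Pi.mul_apply, mul_ite, mul_one, mul_zero, Finset.sum_ite_mem,
          Finset.univ_inter]
      have hval : frobSq (A * P - A) = (∑ i, E i) - ∑ i ∈ S, E i := by
        rw [hXA, frobSq_eq_trace, Matrix.transpose_mul, h1Pt]
        rw [show (P - 1) * Aᵀ * (A * (P - 1)) = (P - 1) * ((Aᵀ * A) * (P - 1)) by
          simp only [Matrix.mul_assoc]]
        rw [Matrix.trace_mul_comm]
        rw [show Aᵀ * A * (P - 1) * (P - 1) = Aᵀ * A * ((P - 1) * (P - 1)) by
          simp only [Matrix.mul_assoc], hPP1, ← hAt]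
        rw [Matrix.mul_sub, Matrix.mul_one, Matrix.trace_sub, htraceB, hBP]
      have hsum1 : ∑ j : Fin Kn, μ j = ∑ i, E i := Equiv.sum_comp φ E
      have hsum2 : ∑ i ∈ S, E i
          = ∑ j ∈ Finset.univ.filter (fun j : Fin Kn => (j : ℕ) < r), μ j :=
        Finset.sum_image (fun x _ y _ hxy => φ.injective hxy)
      have hfiltereq : Finset.univ.filter (fun j : Fin Kn => ¬ r ≤ (j : ℕ))
          = Finset.univ.filter (fun j : Fin Kn => (j : ℕ) < r) := by
        ext j; simp only [Finset.mem_filter, Finset.mem_univ, true_and]; omega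
      have hsplit : ∑ j : Fin Kn, μ j
          = (∑ j ∈ Finset.univ.filter (fun j : Fin Kn => r ≤ (j : ℕ)), μ j)
            + ∑ j ∈ Finset.univ.filter (fun j : Fin Kn => ¬ r ≤ (j : ℕ)), μ j :=
        (Finset.sum_filter_add_sum_filter_not _ _ _).symm
      rw [hfiltereq] at hsplit
      rw [hval]
      linarith
  · -- lower bound
    rintro e ⟨X, hX, rfl⟩
    set K0 : Submodule ℝ (Fin n → ℝ) := LinearMap.ker X.mulVecLin with hK0
    set Ksub : Submodule ℝ (EuclideanSpace ℝ (Fin n)) :=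
      K0.map (EuclideanSpace.equiv (Fin n) ℝ).symm.toLinearEquiv.toLinearMap with hKsub
    set k := Module.finrank ℝ Ksub with hk
    have hk0 : Module.finrank ℝ Ksub = Module.finrank ℝ K0 :=
      LinearEquiv.finrank_map_eq _ _
    have hkrank : X.rank + Module.finrank ℝ K0 = n := by
      have h := LinearMap.finrank_range_add_finrank_ker X.mulVecLin
      rw [Module.finrank_fin_fun] at h
      exact h
    have hkd : (Kn : ℝ) - r ≤ (k : ℝ) := by
      have h4 : n ≤ k + r := by omega
      rw [hKnn]
      push_cast
      have : (n : ℝ) ≤ (k : ℝ) + (r : ℝ) := by exact_mod_cast h4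
      linarith
    set w := stdOrthonormalBasis ℝ Ksub with hw
    set W : Matrix (Fin n) (Fin k) ℝ :=
      Matrix.of fun i t => ((w t : EuclideanSpace ℝ (Fin n)) i) with hWdef
    have hWW : Wᵀ * W = 1 := by
      ext s t
      have h1 : (inner ℝ (w s) (w t) : ℝ) = if s = t then 1 else 0 :=
        orthonormal_iff_ite.mp w.orthonormal s t
      rw [Submodule.coe_inner] at h1
      rw [PiLp.inner_apply] at h1
      simp only [RCLike.inner_apply, starRingEnd_apply, star_trivial] at h1
      rw [Matrix.mul_apply, Matrix.one_apply, ← h1]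
      apply Finset.sum_congr rfl
      intro i _
      rw [Matrix.transpose_apply]
      exact mul_comm _ _
    have hXW : X * W = 0 := by
      ext i t
      obtain ⟨y, hy, hy2⟩ := Submodule.mem_map.mp (w t).2
      have hy3 : X.mulVec y = 0 := by
        have := LinearMap.mem_ker.mp hy
        rwa [Matrix.mulVecLin_apply] at this
      have hcol : (fun j => W j t) = y := by
        funext j
        have hj : ((w t : EuclideanSpace ℝ (Fin n))) j = y j := by rw [← hy2]; rfl
        rw [show W j t = ((w t : EuclideanSpace ℝ (Fin n))) j from rfl, hj]
      have : (X * W) i t = X.mulVec (fun j => W j t) i := by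
        simp [Matrix.mul_apply, Matrix.mulVec, dotProduct]
      rw [this, hcol, hy3]
      rfl
    set Y : Matrix (Fin n) (Fin k) ℝ := star V * W with hY
    have hYt : Yᵀ = Wᵀ * V := by
      rw [hY, Matrix.transpose_mul, hstarV, Matrix.transpose_transpose]
    have hYY : Yᵀ * Y = 1 := by
      rw [hYt, hY, show Wᵀ * V * (star V * W) = Wᵀ * ((V * star V) * W) by
        simp only [Matrix.mul_assoc], hV1, Matrix.one_mul, hWW]
    set Q : Matrix (Fin n) (Fin n) ℝ := Y * Yᵀ with hQ
    have hQt : Qᵀ = Q := by rw [hQ, Matrix.transpose_mul, Matrix.transpose_transpose]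
    have hQQ : Q * Q = Q := by
      rw [hQ, show Y * Yᵀ * (Y * Yᵀ) = Y * ((Yᵀ * Y) * Yᵀ) by
        simp only [Matrix.mul_assoc], hYY, Matrix.one_mul]
    set q : Fin n → ℝ := fun i => Q i i with hq
    have hqY : ∀ i, Q i i = ∑ t, (Y i t) ^ 2 := by
      intro i
      rw [hQ, Matrix.mul_apply]
      apply Finset.sum_congr rfl
      intro t _
      rw [Matrix.transpose_apply, sq]
    have hq0 : ∀ i, 0 ≤ q i := by
      intro i
      rw [hq]
      simp only []
      rw [hqY]
      exact Finset.sum_nonneg fun t _ => sq_nonneg _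
    have hq1 : ∀ i, q i ≤ 1 := by
      intro i
      have hsymm : ∀ l, Q l i = Q i l := fun l => by
        conv_lhs => rw [← hQt]
        rw [Matrix.transpose_apply]
      have h1 : Q i i = ∑ l, (Q i l) ^ 2 := by
        conv_lhs => rw [← hQQ]
        rw [Matrix.mul_apply]
        apply Finset.sum_congr rfl
        intro l _
        rw [hsymm l, sq]
      have h2 : (Q i i) ^ 2 ≤ ∑ l, (Q i l) ^ 2 :=
        Finset.single_le_sum (f := fun l => (Q i l) ^ 2) (fun l _ => sq_nonneg _)
          (Finset.mem_univ i)
      have h5 : Q i i ≤ 1 := le_one_of_sq_le (h1 ▸ h2)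
      rw [hq]
      exact h5
    have hqsum : ∑ i, q i = (k : ℝ) := by
      have h1 : ∑ i, q i = frobSq Y := by
        apply Finset.sum_congr rfl
        intro i _
        rw [hq]
        exact hqY i
      rw [h1, frobSq_eq_trace, hYY, Matrix.trace_one]
      simp
    have htrAW : frobSq (A * W) = ∑ i, E i * q i := by
      rw [frobSq_eq_trace, Matrix.transpose_mul]
      rw [show Wᵀ * Aᵀ * (A * W) = Wᵀ * ((Aᵀ * A) * W) by simp only [Matrix.mul_assoc],
        ← hAt, hspec]
      rw [show Wᵀ * (V * Matrix.diagonal E * star V * W)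
          = (Wᵀ * V) * (Matrix.diagonal E * (star V * W)) by
        simp only [Matrix.mul_assoc], ← hYt, ← hY]
      rw [show Yᵀ * (Matrix.diagonal E * Y) = Yᵀ * Matrix.diagonal E * Y by
        rw [Matrix.mul_assoc], Matrix.trace_mul_cycle, ← hQ]
      rw [show (Q * Matrix.diagonal E).trace = ∑ i, Q i i * E i from by
        simp [Matrix.trace, Matrix.diag, Matrix.mul_diagonal]]
      apply Finset.sum_congr rfl
      intro i _
      rw [mul_comm]
    have happ : ∑ j ∈ Finset.univ.filter (fun j : Fin Kn => r ≤ (j : ℕ)), μ j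
        ≤ ∑ j, μ j * q (φ j) := by
      apply eym_key r μ (fun j => q (φ j)) hμanti hμ0 (fun j => hq0 _) (fun j => hq1 _)
      rw [Equiv.sum_comp φ q, hqsum]
      exact hkd
    have hEq : ∑ j, μ j * q (φ j) = ∑ i, E i * q i :=
      Equiv.sum_comp φ (fun i => E i * q i)
    have hfin1 : frobSq ((X - A) * W) = frobSq (A * W) := by
      rw [Matrix.sub_mul, hXW, zero_sub, frobSq_neg]
    calc ∑ j ∈ Finset.univ.filter (fun j : Fin Kn => r ≤ (j : ℕ)), μ j
        ≤ ∑ j, μ j * q (φ j) := happ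
      _ = ∑ i, E i * q i := hEq
      _ = frobSq (A * W) := htrAW.symm
      _ = frobSq ((X - A) * W) := hfin1.symm
      _ ≤ frobSq (X - A) := frobSq_mul_le _ _ hWW

/-- **Eckart–Young–Mirsky theorem (Frobenius norm).**
For a real `m × n` matrix `A` and `0 ≤ r ≤ min m n`, the infimum of
`‖X - A‖_F²` over all real `m × n` matrices `X` with `rank X ≤ r` equals
`∑_{j > r} σ_j (A)²` (sum over the singular values of `A` beyond the `r`-th),
and this infimum is attained. -/
theorem eckart_young_mirsky (m n r : ℕ) (hr : r ≤ min m n)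
    (A : Matrix (Fin m) (Fin n) ℝ) :
    IsLeast {e : ℝ | ∃ X : Matrix (Fin m) (Fin n) ℝ, X.rank ≤ r ∧ e = frobSq (X - A)}
      (∑ j ∈ Finset.univ.filter
        (fun j : Fin (min (Fintype.card (Fin m)) (Fintype.card (Fin n))) => r ≤ (j : ℕ)),
        (singularValues A j) ^ 2) :=
  eckart_young_mirsky_aux m n r hr A
end
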